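/- arXiv:1601.06390 — 4 statements merged into one kernel-verified Lean document; each statement's English description precedes it below -/
import Mathlib

section
/- For a composition α, the number of quasi-ribbon tableaux of shape α with entries in 𝒜_n (equivalently, the number of quasi-ribbon words of shape α in 𝒜_n^*) equals the binomial coefficient C(n + |α| − ℓ(α), n − ℓ(α)) if ℓ(α) ≤ n, and equals 0 if ℓ(α) > n. -/
/-!
Common setup: words over the alphabet `𝒜_n = {1,…,n}` (modelled as `List ℕ`),
quasi-Kashiwara operators, the quasi-crystal graph, Kashiwara operators,
quasi-ribbon words, and the hypoplactic congruence.
-/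

namespace HypoCrystal

noncomputable section
open scoped Classical

/-- `u` is a word over the alphabet `𝒜_n = {1,…,n}`. -/
def IsWord (n : ℕ) (u : List ℕ) : Prop := ∀ a ∈ u, 1 ≤ a ∧ a ≤ n

/-- `u` has an `i`-inversion: some letter `i+1` occurs strictly to the left of some letter `i`. -/
def HasInv (i : ℕ) (u : List ℕ) : Prop :=
  ∃ v w x : List ℕ, u = v ++ (i + 1) :: w ++ i :: x

/-- Replace the first (leftmost) occurrence of `a` by `b`, if any; otherwise `none`. -/
def replaceFirst (a b : ℕ) : List ℕ → Option (List ℕ)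
  | [] => none
  | x :: xs => if x = a then some (b :: xs) else (replaceFirst a b xs).map (x :: ·)

/-- The quasi-Kashiwara raising operator `e_i` (partial map, `none` = undefined):
if `u` has an `i`-inversion it is undefined; otherwise it replaces the leftmost
letter `i+1` by `i` (undefined if there is no letter `i+1`). -/
def qe (i : ℕ) (u : List ℕ) : Option (List ℕ) :=
  if HasInv i u then none else replaceFirst (i + 1) i u

/-- The quasi-Kashiwara lowering operator `f_i` (partial map, `none` = undefined):
if `u` has an `i`-inversion it is undefined; otherwise it replaces the rightmost
letter `i` by `i+1` (undefined if there is no letter `i`). -/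
def qf (i : ℕ) (u : List ℕ) : Option (List ℕ) :=
  if HasInv i u then none else (replaceFirst i (i + 1) u.reverse).map List.reverse

/-- Weight of a word: `wt u a` is the number of occurrences of the letter `a` in `u`. -/
def wt (u : List ℕ) : ℕ → ℕ := fun a => u.count a

/-- There is an edge labelled `i` from `u` to `v` in the quasi-crystal graph `Γ(hypo_n)`. -/
def Edge (n i : ℕ) (u v : List ℕ) : Prop := 1 ≤ i ∧ i < n ∧ qf i u = some v

/-- `u` and `v` are adjacent (in the underlying undirected graph) in `Γ(hypo_n)`. -/
def Adj (n : ℕ) (u v : List ℕ) : Prop := ∃ i, Edge n i u v ∨ Edge n i v u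

/-- `v` lies in the connected component `Γ(hypo_n, u)` of `u` in the quasi-crystal graph. -/
def SameComp (n : ℕ) : List ℕ → List ℕ → Prop := Relation.ReflTransGen (Adj n)

/-- `u` is a highest-weight word: no raising operator `e_i` is defined on `u`. -/
def HighestWeight (n : ℕ) (u : List ℕ) : Prop := ∀ i, 1 ≤ i → i < n → qe i u = none

/-- `θ` is a quasi-crystal isomorphism from the component of `u` onto the component of `v`:
a weight-preserving bijection preserving labelled edges in both directions. -/
def IsQCIso (n : ℕ) (u v : List ℕ) (θ : List ℕ → List ℕ) : Prop :=
  Set.BijOn θ {x | SameComp n u x} {y | SameComp n v y} ∧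
  (∀ x, SameComp n u x → wt (θ x) = wt x) ∧
  (∀ x y, SameComp n u x → SameComp n u y → ∀ i, (Edge n i x y ↔ Edge n i (θ x) (θ y)))

/-- `u ∼ v`: there is a quasi-crystal isomorphism between the components of `u` and `v`
taking `u` to `v`. -/
def Sim (n : ℕ) (u v : List ℕ) : Prop :=
  ∃ θ : List ℕ → List ℕ, IsQCIso n u v θ ∧ θ u = v

/-- The standardization of `u`: position `k` receives the rank (starting at 1) of the
pair `(u_k, k)` among all pairs `(u_l, l)` ordered lexicographically. -/
def std (u : List ℕ) : List ℕ :=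
  (List.range u.length).map fun k =>
    1 + ((List.range u.length).filter fun l =>
      u.getD l 0 < u.getD k 0 ∨ (u.getD l 0 = u.getD k 0 ∧ l < k)).length

/-- The maximal strictly decreasing factors of a word (the columns of its
quasi-ribbon tabloid, each read bottom-to-top). -/
def decFactors : List ℕ → List (List ℕ)
  | [] => []
  | a :: rest =>
    match decFactors rest with
    | (b :: f) :: fs => if b < a then (a :: b :: f) :: fs else [a] :: (b :: f) :: fs
    | l => [a] :: l

/-- `w` is a quasi-ribbon word: its quasi-ribbon tabloid is a quasi-ribbon tableau,
i.e. the bottom entry of each column is ≤ the top entry of the next column. -/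
def IsQRWord (w : List ℕ) : Prop :=
  (decFactors w).Chain' fun c d => c.headD 0 ≤ d.getLastD 0

/-- Row lengths (top to bottom) of the ribbon diagram whose column heights
(left to right) are given. -/
def rowLengths : List ℕ → List ℕ
  | [] => []
  | [d] => List.replicate d 1
  | d :: e :: rest =>
    List.replicate (d - 1) 1 ++
      (match rowLengths (e :: rest) with
       | [] => [1]
       | r :: rs => (r + 1) :: rs)

/-- The shape (as a composition, listed top row first) of the quasi-ribbon tabloid of `w`. -/
def shape (w : List ℕ) : List ℕ := rowLengths ((decFactors w).map List.length)

/-- Columns of the quasi-ribbon tableau of shape `α` whose `j`-th row consists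
entirely of symbols `j`, where rows are labelled starting from `j₀`. -/
def hwCols : List ℕ → ℕ → List (List ℕ)
  | [], _ => []
  | [a], j => List.replicate a [j]
  | a :: b :: rest, j =>
    List.replicate (a - 1) [j] ++
      (match hwCols (b :: rest) (j + 1) with
       | [] => [[j]]
       | c :: cs => (c ++ [j]) :: cs)

/-- The column reading of the quasi-ribbon tableau of shape `α` whose `j`-th row
consists entirely of symbols `j`. -/
def hwQR (α : List ℕ) : List ℕ := (hwCols α 1).flatten

/-- The defining relations `R_hypo` of the hypoplactic monoid of rank `n`. -/
inductive HypoRel (n : ℕ) : List ℕ → List ℕ → Prop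
  | knuth1 {a b c : ℕ} : 1 ≤ a → a ≤ b → b < c → c ≤ n → HypoRel n [a, c, b] [c, a, b]
  | knuth2 {a b c : ℕ} : 1 ≤ a → a < b → b ≤ c → c ≤ n → HypoRel n [b, a, c] [b, c, a]
  | quasi1 {a b c d : ℕ} : 1 ≤ a → a ≤ b → b < c → c ≤ d → d ≤ n →
      HypoRel n [c, a, d, b] [a, c, b, d]
  | quasi2 {a b c d : ℕ} : 1 ≤ a → a < b → b ≤ c → c < d → d ≤ n →
      HypoRel n [b, d, a, c] [d, b, c, a]

/-- The hypoplactic congruence `≡_hypo`: the congruence on the free monoid generated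
by the relations `R_hypo`. -/
inductive HypoCong (n : ℕ) : List ℕ → List ℕ → Prop
  | of {u v} : HypoRel n u v → HypoCong n u v
  | refl (u) : HypoCong n u u
  | symm {u v} : HypoCong n u v → HypoCong n v u
  | trans {u v w} : HypoCong n u v → HypoCong n v w → HypoCong n u w
  | append {u v u' v'} : HypoCong n u v → HypoCong n u' v' →
      HypoCong n (u ++ u') (v ++ v')

/-- The signature word of `u` for index `i`: each letter `i` becomes `(position, true)`
(that is, `+`) and each letter `i+1` becomes `(position, false)` (that is, `−`). -/
def signWord (i : ℕ) (u : List ℕ) : List (ℕ × Bool) :=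
  (u.zipIdx.map Prod.swap).filterMap fun pa =>
    if pa.2 = i then some (pa.1, true)
    else if pa.2 = i + 1 then some (pa.1, false) else none

/-- Iteratively delete factors `−+` from a signature word, producing the reduced
word `+^p −^q`. -/
def reduce : List (ℕ × Bool) → List (ℕ × Bool)
  | [] => []
  | x :: rest =>
    match reduce rest with
    | y :: rest' => if x.2 = false ∧ y.2 = true then rest' else x :: y :: rest'
    | [] => [x]

/-- The Kashiwara raising operator `ẽ_i`, computed by the signature rule: change to `i`
the letter `i+1` corresponding to the leftmost `−` of the reduced signature word. -/
def KE (i : ℕ) (u : List ℕ) : Option (List ℕ) :=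
  (((reduce (signWord i u)).filter fun x => !x.2).head?).map fun x => u.set x.1 i

/-- The Kashiwara lowering operator `f̃_i`, computed by the signature rule: change to `i+1`
the letter `i` corresponding to the rightmost `+` of the reduced signature word. -/
def KF (i : ℕ) (u : List ℕ) : Option (List ℕ) :=
  (((reduce (signWord i u)).filter fun x => x.2).getLast?).map fun x => u.set x.1 (i + 1)

/-- The Schützenberger involution on `𝒜_n^*`: reverse the word and replace each
letter `a` by `n − a + 1`. -/
def sharp (n : ℕ) (u : List ℕ) : List ℕ := u.reverse.map fun a => n + 1 - a

/-- The largest letter occurring in `u` (0 for the empty word). -/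
def maxLetter (u : List ℕ) : ℕ := u.foldr max 0

/-- `β` is coarser than `α` (`β ⪯ α`): they have the same weight and every proper
partial sum of `β` is a proper partial sum of `α`. -/
def Coarser (β α : List ℕ) : Prop :=
  β.sum = α.sum ∧ ∀ p < β.length, ∃ m < α.length, (β.take p).sum = (α.take m).sum

end
end HypoCrystal

/-!
Reading the columns of a quasi-ribbon tableau top to bottom gives a weakly increasing
sequence which strictly increases inside each column. Adding `j` to the entries of the `j`-th
column (counted from `0`) makes it strictly increasing: a tableau of shape `α` with entries in
`𝒜_n` and `k = |α| - ℓ(α) + 1` columns becomes an `|α|`-subset of `{1, …, n + k - 1}`, and every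
such subset arises from exactly one tableau. Hence there are
`C(n + |α| - ℓ(α), |α|) = C(n + |α| - ℓ(α), n - ℓ(α))` of them.
-/

namespace HypoCrystal

lemma flatten_decFactors (w : List ℕ) : (decFactors w).flatten = w := by
  induction w with
  | nil => rfl
  | cons a rest ih =>
    rw [decFactors]
    split
    · next b f fs h => rw [h] at ih; split_ifs <;> simp [← ih]
    · simp [ih]

lemma decFactors_columns (w : List ℕ) :
    ∀ c ∈ decFactors w, c ≠ [] ∧ c.Pairwise (· > ·) := by
  induction w with
  | nil => simp [decFactors]
  | cons a rest ih =>
    rw [decFactors]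
    split
    · next b f fs h =>
      rw [h] at ih
      obtain ⟨-, hbf⟩ := ih _ List.mem_cons_self
      split_ifs with hba
      · refine List.forall_mem_cons.2 ⟨⟨List.cons_ne_nil _ _, ?_⟩, fun c hc => ih c (by simp [hc])⟩
        refine List.pairwise_cons.2 ⟨fun x hx => ?_, hbf⟩
        rcases List.mem_cons.1 hx with rfl | hx
        · exact hba
        · exact lt_trans (List.rel_of_pairwise_cons hbf hx) hba
      · exact List.forall_mem_cons.2 ⟨by simp, ih⟩
    · exact List.forall_mem_cons.2 ⟨by simp, ih⟩

lemma exists_decFactors_cons (a : ℕ) (rest : List ℕ) :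
    ∃ s ss, decFactors (a :: rest) = (a :: s) :: ss := by
  rw [decFactors]
  split
  · split_ifs <;> simp
  · simp

lemma decFactors_append {c : List ℕ} (r : List ℕ) (hc : c ≠ [] ∧ c.Pairwise (· > ·))
    (hr : ∀ b ∈ r.head?, c.getLastD 0 ≤ b) :
    decFactors (c ++ r) = c :: decFactors r := by
  obtain ⟨hne, hdec⟩ := hc
  induction c with
  | nil => exact absurd rfl hne
  | cons a c ih =>
    rcases c with _ | ⟨b, c⟩
    · rcases r with _ | ⟨x, r⟩
      · rfl
      · obtain ⟨s, ss, h⟩ := exists_decFactors_cons x r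
        have hxa : ¬ x < a := by simpa using hr
        rw [List.singleton_append, decFactors, h]
        simp [hxa]
    · have hba : b < a := List.rel_of_pairwise_cons hdec List.mem_cons_self
      have ih' := ih (by simpa using hr) (List.cons_ne_nil _ _) hdec.of_cons
      simp only [List.cons_append] at ih' ⊢
      rw [decFactors, ih']
      simp [hba]

lemma decFactors_flatten {L : List (List ℕ)} (hL : ∀ c ∈ L, c ≠ [] ∧ c.Pairwise (· > ·))
    (hbd : L.IsChain fun c d => c.getLastD 0 ≤ d.headD 0) :
    decFactors L.flatten = L := by
  induction L with
  | nil => rfl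
  | cons c cs ih =>
    rw [List.flatten_cons, decFactors_append _ (hL c List.mem_cons_self),
      ih (fun d hd => hL d (List.mem_cons_of_mem _ hd)) hbd.tail]
    rcases cs with _ | ⟨d, ds⟩
    · simp
    · obtain ⟨b, d, rfl⟩ := List.exists_cons_of_ne_nil (hL d (by simp)).1
      simpa using (List.isChain_cons_cons.1 hbd).1

@[elab_as_elim]
lemma composition_induction {P : List ℕ → Prop} (nil : P []) (one : P [1])
    (one_cons : ∀ e t, (∀ d ∈ e :: t, 0 < d) → P (e :: t) → P (1 :: e :: t))
    (succ_cons : ∀ a t, (∀ d ∈ a :: t, 0 < d) → P (a :: t) → P ((a + 1) :: t))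
    (D : List ℕ) (hD : ∀ d ∈ D, 0 < d) : P D := by
  revert hD
  induction D with
  | nil => exact fun _ => nil
  | cons a t ih =>
    intro hD
    have ht : ∀ d ∈ t, 0 < d := fun d hd => hD d (List.mem_cons_of_mem _ hd)
    induction a, Nat.one_le_iff_ne_zero.2 (hD a List.mem_cons_self).ne' using Nat.le_induction with
    | base =>
      rcases t with _ | ⟨e, t⟩
      · exact one
      · exact one_cons e t ht (ih ht)
    | succ a ha iha =>
      have hat : ∀ d ∈ a :: t, 0 < d := List.forall_mem_cons.2 ⟨ha, ht⟩
      exact succ_cons a t hat (iha hat)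

lemma rowLengths_one_cons {t : List ℕ} {r : ℕ} {rs : List ℕ} (h : rowLengths t = r :: rs) :
    rowLengths (1 :: t) = (r + 1) :: rs := by
  rcases t with _ | ⟨e, t⟩
  · simp [rowLengths] at h
  · rw [rowLengths, h]
    rfl

lemma rowLengths_succ_cons {a : ℕ} (ha : 0 < a) (t : List ℕ) :
    rowLengths ((a + 1) :: t) = 1 :: rowLengths (a :: t) := by
  obtain ⟨a, rfl⟩ := Nat.exists_eq_add_of_lt ha
  rcases t with _ | ⟨e, t⟩ <;> simp [rowLengths, List.replicate_succ]

lemma rowLengths_ne_nil {D : List ℕ} (hD : ∀ d ∈ D, 0 < d) (hne : D ≠ []) :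
    rowLengths D ≠ [] := by
  revert hne
  refine composition_induction ?_ ?_ ?_ ?_ D hD
  · exact fun h => h
  · exact fun _ => by decide
  · intro e t _ ih _
    obtain ⟨r, rs, h⟩ := List.exists_cons_of_ne_nil (ih (List.cons_ne_nil _ _))
    simp [rowLengths_one_cons h]
  · intro a t hD _ _
    simp [rowLengths_succ_cons (hD a List.mem_cons_self)]

lemma rowLengths_pos {D : List ℕ} (hD : ∀ d ∈ D, 0 < d) : ∀ x ∈ rowLengths D, 0 < x := by
  refine composition_induction ?_ ?_ ?_ ?_ D hD
  · simp [rowLengths]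
  · decide
  · intro e t hD ih
    obtain ⟨r, rs, h⟩ := List.exists_cons_of_ne_nil (rowLengths_ne_nil hD (List.cons_ne_nil _ _))
    rw [h] at ih
    simpa [rowLengths_one_cons h] using (List.forall_mem_cons.1 ih).2
  · intro a t hD ih
    simpa [rowLengths_succ_cons (hD a List.mem_cons_self)] using ih

lemma sum_rowLengths {D : List ℕ} (hD : ∀ d ∈ D, 0 < d) : (rowLengths D).sum = D.sum := by
  refine composition_induction rfl rfl ?_ ?_ D hD
  · intro e t hD ih
    obtain ⟨r, rs, h⟩ := List.exists_cons_of_ne_nil (rowLengths_ne_nil hD (List.cons_ne_nil _ _))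
    rw [h] at ih
    simp only [rowLengths_one_cons h, List.sum_cons] at ih ⊢
    omega
  · intro a t hD ih
    simp only [rowLengths_succ_cons (hD a List.mem_cons_self), List.sum_cons] at ih ⊢
    omega

lemma length_rowLengths_add_length {D : List ℕ} (hD : ∀ d ∈ D, 0 < d) (hne : D ≠ []) :
    (rowLengths D).length + D.length = D.sum + 1 := by
  revert hne
  refine composition_induction ?_ ?_ ?_ ?_ D hD
  · exact fun h => absurd rfl h
  · exact fun _ => rfl
  · intro e t hD ih _
    obtain ⟨r, rs, h⟩ := List.exists_cons_of_ne_nil (rowLengths_ne_nil hD (List.cons_ne_nil _ _))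
    have ih := ih (List.cons_ne_nil _ _)
    rw [h] at ih
    simp only [rowLengths_one_cons h, List.length_cons, List.sum_cons] at ih ⊢
    omega
  · intro a t hD ih _
    have ih := ih (List.cons_ne_nil _ _)
    simp only [rowLengths_succ_cons (hD a List.mem_cons_self), List.length_cons,
      List.sum_cons] at ih ⊢
    omega

lemma rowLengths_rowLengths {D : List ℕ} (hD : ∀ d ∈ D, 0 < d) :
    rowLengths (rowLengths D) = D := by
  refine composition_induction rfl rfl ?_ ?_ D hD
  · intro e t hD ih
    obtain ⟨r, rs, h⟩ := List.exists_cons_of_ne_nil (rowLengths_ne_nil hD (List.cons_ne_nil _ _))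
    have hr : 0 < r := rowLengths_pos hD r (by simp [h])
    rw [rowLengths_one_cons h, rowLengths_succ_cons hr, ← h, ih]
  · intro a t hD ih
    rw [rowLengths_succ_cons (hD a List.mem_cons_self), rowLengths_one_cons ih]

/-- `L` lists the columns of a quasi-ribbon tableau with entries in `𝒜_n`, each read bottom to
top as in `decFactors`. -/
def IsQRColumns (n : ℕ) (L : List (List ℕ)) : Prop :=
  (∀ c ∈ L, c ≠ [] ∧ c.Pairwise (· > ·)) ∧ L.IsChain (fun c d => c.headD 0 ≤ d.getLastD 0) ∧
    ∀ a ∈ L.flatten, 1 ≤ a ∧ a ≤ n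

lemma isQRColumns_cons {n : ℕ} {c : List ℕ} {cs : List (List ℕ)} :
    IsQRColumns n (c :: cs) ↔ (c ≠ [] ∧ c.Pairwise (· > ·) ∧ (∀ a ∈ c, 1 ≤ a ∧ a ≤ n) ∧
      ∀ d ∈ cs.head?, c.headD 0 ≤ d.getLastD 0) ∧ IsQRColumns n cs := by
  simp only [IsQRColumns, List.forall_mem_cons, List.isChain_cons, List.flatten_cons,
    List.mem_append]
  grind

lemma le_headD_of_mem {c : List ℕ} (hc : c.Pairwise (· > ·)) {x : ℕ} (hx : x ∈ c) :
    x ≤ c.headD 0 := by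
  rcases c with _ | ⟨a, c⟩
  · simp at hx
  · rcases List.mem_cons.1 hx with rfl | hx
    · exact le_rfl
    · exact (List.rel_of_pairwise_cons hc hx).le

lemma getLastD_le_headD {c : List ℕ} (hc : c.Pairwise (· > ·)) : c.getLastD 0 ≤ c.headD 0 := by
  rcases eq_or_ne c [] with rfl | hne
  · rfl
  · rw [List.getLastD_eq_getLast?, List.getLast?_eq_some_getLast hne]
    exact le_headD_of_mem hc (List.getLast_mem hne)

lemma isQRColumns_decFactors_iff {n : ℕ} {w : List ℕ} :
    IsQRColumns n (decFactors w) ↔ IsWord n w ∧ IsQRWord w := by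
  rw [IsQRColumns, flatten_decFactors]
  exact ⟨fun h => ⟨h.2.2, h.2.1⟩, fun h => ⟨decFactors_columns w, h.2, h.1⟩⟩

lemma decFactors_flatten_of_isQRColumns {n : ℕ} {L : List (List ℕ)} (hL : IsQRColumns n L) :
    decFactors L.flatten = L := by
  obtain ⟨hcol, hqr, -⟩ := hL
  refine decFactors_flatten hcol (hqr.imp_of_mem_imp fun c d hc hd hcd => ?_)
  calc c.getLastD 0 ≤ c.headD 0 := getLastD_le_headD (hcol c hc).2
    _ ≤ d.getLastD 0 := hcd
    _ ≤ d.headD 0 := getLastD_le_headD (hcol d hd).2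

def encodeColumns : ℕ → List (List ℕ) → List ℕ
  | _, [] => []
  | i, c :: cs => c.reverse.map (· + i) ++ encodeColumns (i + 1) cs

def decodeColumns : ℕ → List ℕ → List ℕ → List (List ℕ)
  | _, [], _ => []
  | i, d :: D, y => ((y.take d).map (· - i)).reverse :: decodeColumns (i + 1) D (y.drop d)

lemma length_encodeColumns (i : ℕ) (L : List (List ℕ)) :
    (encodeColumns i L).length = (L.map List.length).sum := by
  induction L generalizing i with
  | nil => rfl
  | cons c cs ih => simp [encodeColumns, ih]

lemma decodeColumns_encodeColumns (i : ℕ) (L : List (List ℕ)) :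
    decodeColumns i (L.map List.length) (encodeColumns i L) = L := by
  induction L generalizing i with
  | nil => rfl
  | cons c cs ih =>
    rw [List.map_cons, encodeColumns, decodeColumns, List.take_left' (by simp),
      List.drop_left' (by simp), ih, List.map_map]
    simp [Function.comp_def]

lemma map_length_decodeColumns (i : ℕ) {D y : List ℕ} (hy : y.length = D.sum) :
    (decodeColumns i D y).map List.length = D := by
  induction D generalizing i y with
  | nil => rfl
  | cons d D ih =>
    simp only [List.sum_cons] at hy
    have htail := ih (i + 1) (y := y.drop d) (by rw [List.length_drop]; omega)
    simp only [decodeColumns, List.map_cons, List.length_reverse, List.length_map,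
      List.length_take, htail, List.cons.injEq, and_true]
    omega

lemma encodeColumns_decodeColumns (i : ℕ) {D y : List ℕ} (hD : ∀ d ∈ D, 0 < d)
    (hy : y.Pairwise (· < ·)) (hyi : ∀ a ∈ y, i < a) (hlen : y.length = D.sum) :
    encodeColumns i (decodeColumns i D y) = y := by
  induction D generalizing i y with
  | nil => simpa [decodeColumns, encodeColumns, eq_comm] using hlen
  | cons d D ih =>
    simp only [List.sum_cons] at hlen
    have hd := hD d List.mem_cons_self
    rw [← List.take_append_drop d y] at hy
    obtain ⟨-, hdrop, hcross⟩ := List.pairwise_append.1 hy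
    obtain ⟨a, ha⟩ : ∃ a, a ∈ y.take d :=
      List.exists_mem_of_ne_nil _ (List.ne_nil_of_length_pos (by simp; omega))
    have htail : encodeColumns (i + 1) (decodeColumns (i + 1) D (y.drop d)) = y.drop d :=
      ih (i + 1) (fun e he => hD e (List.mem_cons_of_mem _ he)) hdrop
        (fun b hb => by
          have := hyi a (List.mem_of_mem_take ha)
          have := hcross a ha b hb
          omega)
        (by rw [List.length_drop]; omega)
    rw [decodeColumns, encodeColumns, htail, List.reverse_reverse, List.map_map]
    conv_rhs => rw [← List.take_append_drop d y]
    congr 1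
    refine (List.map_congr_left fun x hx => ?_).trans (List.map_id _)
    have := hyi x (List.mem_of_mem_take hx)
    simp only [Function.comp_apply, id]
    omega

lemma mem_encodeColumns_of_mem {i x : ℕ} {c : List ℕ} (cs : List (List ℕ)) (hx : x ∈ c) :
    x + i ∈ encodeColumns i (c :: cs) := by
  simp [encodeColumns, hx]

lemma pairwise_map_add_reverse_iff {i : ℕ} {c : List ℕ} :
    (c.reverse.map (· + i)).Pairwise (· < ·) ↔ c.Pairwise (· > ·) := by
  simp [List.pairwise_map, List.pairwise_reverse]

lemma isChain_encodeColumns {L : List (List ℕ)} (hcol : ∀ c ∈ L, c ≠ [] ∧ c.Pairwise (· > ·))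
    (hqr : L.IsChain fun c d => c.headD 0 ≤ d.getLastD 0) (i : ℕ) :
    (encodeColumns i L).IsChain (· < ·) := by
  induction L generalizing i with
  | nil => exact .nil
  | cons c cs ih =>
    rw [encodeColumns, List.isChain_append]
    refine ⟨(pairwise_map_add_reverse_iff.2 (hcol c List.mem_cons_self).2).isChain,
      ih (fun d hd => hcol d (List.mem_cons_of_mem _ hd)) hqr.tail (i + 1), ?_⟩
    rcases cs with _ | ⟨d, ds⟩
    · simp [encodeColumns]
    · obtain ⟨a, c, rfl⟩ := List.exists_cons_of_ne_nil (hcol c List.mem_cons_self).1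
      obtain ⟨d, b, rfl⟩ := (List.eq_nil_or_concat d).resolve_left (hcol d (by simp)).1
      have hab : a ≤ b := by simpa using (List.isChain_cons_cons.1 hqr).1
      simpa [encodeColumns] using (by omega : a + i < b + (i + 1))

lemma bounds_encodeColumns {n : ℕ} {L : List (List ℕ)} (hL : ∀ a ∈ L.flatten, 1 ≤ a ∧ a ≤ n)
    (i : ℕ) : ∀ y ∈ encodeColumns i L, i < y ∧ y < n + i + L.length := by
  induction L generalizing i with
  | nil => simp [encodeColumns]
  | cons c cs ih =>
    rw [List.flatten_cons, List.forall_mem_append] at hL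
    intro y hy
    simp only [encodeColumns, List.mem_append, List.mem_map, List.mem_reverse] at hy
    simp only [List.length_cons]
    rcases hy with ⟨x, hx, rfl⟩ | hy
    · have := hL.1 x hx
      omega
    · have := ih hL.2 (i + 1) y hy
      omega

lemma isQRColumns_of_encodeColumns {n i : ℕ} {L : List (List ℕ)} (hne : ∀ c ∈ L, c ≠ [])
    (hy : (encodeColumns i L).Pairwise (· < ·))
    (hb : ∀ y ∈ encodeColumns i L, i < y ∧ y < n + i + L.length) : IsQRColumns n L := by
  induction L generalizing i with
  | nil => simp [IsQRColumns]
  | cons c cs ih =>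
    rw [encodeColumns, List.pairwise_append] at hy
    obtain ⟨hA, hB, hcross⟩ := hy
    simp only [encodeColumns, List.mem_append, List.length_cons] at hb
    obtain ⟨a, c, rfl⟩ := List.exists_cons_of_ne_nil (hne c List.mem_cons_self)
    have haA : a + i ∈ (a :: c).reverse.map (· + i) :=
      List.mem_map_of_mem (List.mem_reverse.2 List.mem_cons_self)
    have hcs : IsQRColumns n cs := by
      refine ih (fun d hd => hne d (List.mem_cons_of_mem _ hd)) hB fun y hy => ?_
      have := hb _ (Or.inl haA)
      have := hcross _ haA y hy
      have := hb y (Or.inr hy)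
      omega
    have hcolumn : ∀ x ∈ a :: c, 1 ≤ x ∧ x ≤ n ∧ ∀ d ∈ cs.head?, x ≤ d.getLastD 0 := by
      intro x hx
      have hxA : x + i ∈ (a :: c).reverse.map (· + i) := List.mem_map_of_mem (List.mem_reverse.2 hx)
      have hxb := hb _ (Or.inl hxA)
      rcases cs with _ | ⟨d, ds⟩
      · simp only [List.length_nil] at hxb
        exact ⟨by omega, by omega, by simp⟩
      · have hd := hne d (by simp)
        have hz := mem_encodeColumns_of_mem (i := i + 1) ds (List.getLast_mem hd)
        have hzn := (isQRColumns_cons.1 hcs).1.2.2.1 _ (List.getLast_mem hd)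
        have := hcross _ hxA _ hz
        simp only [List.head?_cons, Option.mem_def, Option.some.injEq, forall_eq',
          List.getLastD_eq_getLast?, List.getLast?_eq_some_getLast hd, Option.getD_some]
        omega
    exact isQRColumns_cons.2 ⟨⟨List.cons_ne_nil _ _, pairwise_map_add_reverse_iff.1 hA,
      fun x hx => ⟨(hcolumn x hx).1, (hcolumn x hx).2.1⟩, (hcolumn a List.mem_cons_self).2.2⟩, hcs⟩

lemma ncard_sorted_lists {β : Type*} [LinearOrder β] (s : Finset β) (m : ℕ) :
    {l : List β | l.Pairwise (· < ·) ∧ l.length = m ∧ ∀ a ∈ l, a ∈ s}.ncard = s.card.choose m := by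
  classical
  have hbij : Set.BijOn List.toFinset
      {l : List β | l.Pairwise (· < ·) ∧ l.length = m ∧ ∀ a ∈ l, a ∈ s} (s.powersetCard m) := by
    refine Set.InvOn.bijOn (f' := fun t => t.sort) ⟨fun l hl => ?_, fun t _ => ?_⟩
      (fun l hl => ?_) (fun t ht => ?_)
    · exact (List.toFinset_sort _ hl.1.nodup).2 (hl.1.imp le_of_lt)
    · exact Finset.sort_toFinset _ _
    · obtain ⟨hl, rfl, hs⟩ := hl
      refine Finset.mem_powersetCard.2 ⟨fun a ha => hs a (List.mem_toFinset.1 ha), ?_⟩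
      exact List.toFinset_card_of_nodup hl.nodup
    · rw [Finset.mem_coe, Finset.mem_powersetCard] at ht
      exact ⟨(Finset.sortedLT_sort t).pairwise, by simp [ht.2],
        fun a ha => ht.1 (Finset.mem_sort _ |>.1 ha)⟩
  rw [hbij.ncard_eq, Set.ncard_coe_finset, Finset.card_powersetCard]

lemma bijOn_encodeColumns (n : ℕ) {D : List ℕ} (hD : ∀ d ∈ D, 0 < d) :
    Set.BijOn (encodeColumns 0) {L | IsQRColumns n L ∧ L.map List.length = D}
      {y | y.Pairwise (· < ·) ∧ y.length = D.sum ∧ ∀ a ∈ y, a ∈ Finset.Ioo 0 (n + D.length)} := by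
  refine Set.InvOn.bijOn (f' := decodeColumns 0 D) ⟨fun L hL => ?_, fun y hy => ?_⟩
    (fun L hL => ?_) (fun y hy => ?_)
  · rw [← hL.2]
    exact decodeColumns_encodeColumns 0 L
  · exact encodeColumns_decodeColumns 0 hD hy.1 (fun a ha => (Finset.mem_Ioo.1 (hy.2.2 a ha)).1)
      hy.2.1
  · obtain ⟨⟨hcol, hqr, hent⟩, hlen⟩ := hL
    refine ⟨List.isChain_iff_pairwise.1 (isChain_encodeColumns hcol hqr 0), ?_, fun a ha => ?_⟩
    · rw [length_encodeColumns, hlen]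
    · rw [← hlen, List.length_map]
      simpa using bounds_encodeColumns hent 0 a ha
  · obtain ⟨hpw, hlen, hmem⟩ := hy
    simp only [Finset.mem_Ioo] at hmem
    have hlens := map_length_decodeColumns 0 hlen
    have hy := encodeColumns_decodeColumns 0 hD hpw (fun a ha => (hmem a ha).1) hlen
    have hk : (decodeColumns 0 D y).length = D.length := by
      simpa using congrArg List.length hlens
    refine ⟨isQRColumns_of_encodeColumns (i := 0) (fun c hc => ?_) (by rwa [hy])
      fun a ha => ?_, hlens⟩
    · exact List.ne_nil_of_length_pos (hD _ (hlens ▸ List.mem_map_of_mem hc))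
    · rw [hy] at ha
      simpa [hk] using hmem a ha

lemma shape_eq_iff {w α : List ℕ} (hα : ∀ a ∈ α, 0 < a) :
    shape w = α ↔ (decFactors w).map List.length = rowLengths α := by
  have hpos : ∀ d ∈ (decFactors w).map List.length, 0 < d := by
    simp only [List.mem_map]
    rintro _ ⟨c, hc, rfl⟩
    exact List.length_pos_iff.2 (decFactors_columns w c hc).1
  rw [shape]
  constructor
  · rintro rfl
    exact (rowLengths_rowLengths hpos).symm
  · intro h
    rw [h, rowLengths_rowLengths hα]

lemma bijOn_decFactors (n : ℕ) {α : List ℕ} (hα : ∀ a ∈ α, 0 < a) :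
    Set.BijOn decFactors {w | IsWord n w ∧ IsQRWord w ∧ shape w = α}
      {L | IsQRColumns n L ∧ L.map List.length = rowLengths α} := by
  refine Set.InvOn.bijOn (f' := List.flatten)
    ⟨fun w _ => flatten_decFactors w, fun L hL => decFactors_flatten_of_isQRColumns hL.1⟩
    (fun w hw => ?_) (fun L hL => ?_)
  · exact ⟨isQRColumns_decFactors_iff.2 ⟨hw.1, hw.2.1⟩, (shape_eq_iff hα).1 hw.2.2⟩
  · have hdec := decFactors_flatten_of_isQRColumns hL.1
    have hw := isQRColumns_decFactors_iff.1 (hdec ▸ hL.1)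
    exact ⟨hw.1, hw.2, (shape_eq_iff hα).2 (by rw [hdec]; exact hL.2)⟩

/-- For a composition `α`, the number of quasi-ribbon words of shape
`α` in `𝒜_n^*` (equivalently, of quasi-ribbon tableaux of shape `α` with entries in
`𝒜_n`) equals `C(n + |α| − ℓ(α), n − ℓ(α))` if `ℓ(α) ≤ n`, and `0` if `ℓ(α) > n`. -/
theorem count_quasiRibbon_words (n : ℕ) (α : List ℕ) (hpos : ∀ a ∈ α, 0 < a) :
    {w : List ℕ | IsWord n w ∧ IsQRWord w ∧ shape w = α}.ncard =
      if α.length ≤ n then (n + α.sum - α.length).choose (n - α.length) else 0 := by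
  rw [(bijOn_decFactors n hpos).ncard_eq, (bijOn_encodeColumns n (rowLengths_pos hpos)).ncard_eq,
    ncard_sorted_lists, Nat.card_Ioo, Nat.sub_zero, sum_rowLengths hpos]
  rcases eq_or_ne α [] with rfl | hne
  · simp
  have hcols := length_rowLengths_add_length hpos hne
  have hlen : α.length ≤ α.sum := List.length_le_sum_of_one_le α hpos
  have hℓ : 0 < α.length := List.length_pos_iff.2 hne
  split_ifs with h
  · rw [← Nat.choose_symm (by omega)]
    congr 1 <;> omega
  · exact Nat.choose_eq_zero_of_lt (by omega)

end HypoCrystal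
end

section
/- Let u ∈ 𝒜_n^* and i ∈ {1,...,n−1}. If the Kashiwara operator ẽ_i is defined on u, then the sequence of lengths of the maximal strictly decreasing factors of ẽ_i(u) equals the sequence of lengths of the maximal strictly decreasing factors of u; likewise, if f̃_i is defined on u, then the sequence of lengths of the maximal strictly decreasing factors of f̃_i(u) equals that of u. (Equivalently, the Kashiwara operators preserve the shape of the associated quasi-ribbon tabloid.) -/
/-!
A change of the letter at position `k` leaves the lengths of the maximal strictly decreasing
factors intact as long as the new letter compares with the two neighbours of position `k` as the
old one did. The letter `i + 1` that `ẽ_i` lowers to `i` is not followed by `i`, because the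
factor `−+` they would form cancels; nor is it preceded by `i + 1`, because a `−` immediately
before a remaining `−` remains as well and would lie further left. Symmetrically, the letter `i`
that `f̃_i` raises is neither preceded by `i + 1` nor followed by `i`.
-/

namespace HypoCrystal

open scoped List

theorem distinct_of_nodup_append_cons_cons {α : Type*} {A B : List α} {x y : α}
    (h : (A ++ x :: y :: B).Nodup) : x ≠ y ∧ x ∉ A ∧ x ∉ B ∧ y ∉ A ∧ y ∉ B := by
  have hx := List.nodup_middle.mp h
  have hy := List.nodup_middle.mp (by simpa using h : ((A ++ [x]) ++ y :: B).Nodup)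
  simp only [List.nodup_cons, List.mem_append, List.mem_cons, not_or] at hx hy
  tauto

theorem exists_eq_append_cons_cons_of_pairwise {α : Type*} {f : α → ℕ} {l : List α}
    (hl : l.Pairwise fun a b => f a < f b) {a b : α} (ha : a ∈ l) (hb : b ∈ l)
    (hab : f b = f a + 1) : ∃ A B, l = A ++ a :: b :: B := by
  induction l with
  | nil => simp at ha
  | cons c l ih =>
    rw [List.pairwise_cons] at hl
    obtain rfl | ha := List.mem_cons.mp ha
    · have hb : b ∈ l := (List.mem_cons.mp hb).resolve_left (by rintro rfl; omega)
      cases l with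
      | nil => simp at hb
      | cons d l =>
        obtain rfl | hb := List.mem_cons.mp hb
        · exact ⟨[], l, rfl⟩
        · have := hl.1 d (by simp)
          have := List.rel_of_pairwise_cons hl.2 hb
          omega
    · obtain ⟨A, B, rfl⟩ := ih hl.2 ha ((List.mem_cons.mp hb).resolve_left
        (by rintro rfl; have := hl.1 a ‹_›; omega))
      exact ⟨c :: A, B, rfl⟩

theorem le_of_head?_eq_some_of_pairwise {α : Type*} {f : α → ℕ} {l : List α}
    (hl : l.Pairwise fun a b => f a < f b) {a b : α} (ha : l.head? = some a) (hb : b ∈ l) :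
    f a ≤ f b := by
  obtain ⟨l, rfl⟩ := List.head?_eq_some_iff.mp ha
  obtain rfl | hb := List.mem_cons.mp hb
  · rfl
  · exact (List.rel_of_pairwise_cons hl hb).le

theorem le_of_getLast?_eq_some_of_pairwise {α : Type*} {f : α → ℕ} {l : List α}
    (hl : l.Pairwise fun a b => f a < f b) {a b : α} (ha : l.getLast? = some a) (hb : b ∈ l) :
    f b ≤ f a := by
  obtain ⟨l, rfl⟩ := List.getLast?_eq_some_iff.mp ha
  obtain hb | hb := List.mem_append.mp hb
  · exact (List.pairwise_append.mp hl).2.2 b hb a (List.mem_singleton_self a) |>.le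
  · rw [List.mem_singleton.mp hb]

def reduceStep (x : ℕ × Bool) : List (ℕ × Bool) → List (ℕ × Bool)
  | y :: r => if x.2 = false ∧ y.2 = true then r else x :: y :: r
  | [] => [x]

theorem reduce_cons (x : ℕ × Bool) (l : List (ℕ × Bool)) :
    reduce (x :: l) = reduceStep x (reduce l) := rfl

theorem reduceStep_eq_cons {x : ℕ × Bool} {r : List (ℕ × Bool)}
    (h : ∀ z ∈ r.head?, x.2 = false → z.2 = false) : reduceStep x r = x :: r := by
  cases r with
  | nil => rfl
  | cons z r =>
    have := h z rfl
    cases hx : x.2 <;> cases hz : z.2 <;> simp_all [reduceStep]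

theorem reduceStep_of_pos {x : ℕ × Bool} (hx : x.2 = true) (r : List (ℕ × Bool)) :
    reduceStep x r = x :: r :=
  reduceStep_eq_cons fun _ _ h => absurd hx (by simp [h])

theorem reduceStep_neg_pos {x y : ℕ × Bool} (hx : x.2 = false) (hy : y.2 = true)
    (r : List (ℕ × Bool)) : reduceStep x (y :: r) = r := by
  simp [reduceStep, hx, hy]

theorem reduceStep_sublist (x : ℕ × Bool) (r : List (ℕ × Bool)) :
    reduceStep x r <+ x :: r := by
  cases r with
  | nil => exact .refl _
  | cons y r =>
    by_cases h : x.2 = false ∧ y.2 = true <;> simp [reduceStep, h]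

theorem reduce_append (A B : List (ℕ × Bool)) :
    reduce (A ++ B) = A.foldr reduceStep (reduce B) := by
  induction A with
  | nil => rfl
  | cons x A ih => rw [List.cons_append, reduce_cons, ih, List.foldr_cons]

theorem foldr_reduceStep_sublist (A r : List (ℕ × Bool)) : A.foldr reduceStep r <+ A ++ r := by
  induction A with
  | nil => exact .refl _
  | cons x A ih => exact (reduceStep_sublist x _).trans (ih.cons_cons x)

theorem reduce_sublist (l : List (ℕ × Bool)) : reduce l <+ l := by
  induction l with
  | nil => exact .slnil
  | cons x l ih => exact (reduceStep_sublist x _).trans (ih.cons_cons x)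

theorem exists_foldr_reduceStep_eq (A s : List (ℕ × Bool)) :
    ∃ t m, A.foldr reduceStep s = t ++ s.drop m ∧ t <+ A ∧ ∀ z ∈ s.take m, z.2 = true := by
  induction A with
  | nil => exact ⟨[], 0, by simp, .slnil, by simp⟩
  | cons x A ih =>
    obtain ⟨t, m, ht, htA, hpos⟩ := ih
    rw [List.foldr_cons, ht]
    cases t with
    | nil =>
      cases hd : s.drop m with
      | nil => exact ⟨[x], m, by simp [reduceStep, hd], (List.nil_sublist A).cons_cons x, hpos⟩
      | cons z r =>
        by_cases hc : x.2 = false ∧ z.2 = true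
        · refine ⟨[], m + 1, ?_, List.nil_sublist _, ?_⟩
          · simp [reduceStep, hc, ← List.drop_drop, hd]
          · have : s.take (m + 1) = s.take m ++ [z] := by
              rw [List.take_add_one, ← List.head?_drop, hd]; rfl
            rw [this]
            intro w hw
            rcases List.mem_append.mp hw with hw | hw
            · exact hpos w hw
            · exact List.eq_of_mem_singleton hw ▸ hc.2
        · exact ⟨[x], m, by simp [reduceStep, hc, hd], (List.nil_sublist A).cons_cons x, hpos⟩
    | cons h t =>
      by_cases hc : x.2 = false ∧ h.2 = true
      · exact ⟨t, m, by simp [reduceStep, hc], ((List.sublist_cons_self h t).trans htA).cons x,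
          hpos⟩
      · exact ⟨x :: h :: t, m, by simp [reduceStep, hc], htA.cons_cons x, hpos⟩

section AdjacentPair

variable {A B : List (ℕ × Bool)} {x y : ℕ × Bool}

theorem notMem_reduce_of_neg_pos (hx : x.2 = false) (hy : y.2 = true)
    (hl : (A ++ x :: y :: B).Nodup) :
    x ∉ reduce (A ++ x :: y :: B) ∧ y ∉ reduce (A ++ x :: y :: B) := by
  obtain ⟨-, hxA, hxB, hyA, hyB⟩ := distinct_of_nodup_append_cons_cons hl
  have hred : reduce (A ++ x :: y :: B) = reduce (A ++ B) := by
    rw [reduce_append, reduce_append, reduce_cons, reduce_cons, reduceStep_of_pos hy,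
      reduceStep_neg_pos hx hy]
  rw [hred]
  exact ⟨fun h => by simpa [hxA, hxB] using (reduce_sublist _).subset h,
    fun h => by simpa [hyA, hyB] using (reduce_sublist _).subset h⟩

/-- `x` can only be cancelled after `y` is. -/
theorem mem_reduce_of_neg_neg (hx : x.2 = false) (hy : y.2 = false)
    (hl : (A ++ x :: y :: B).Nodup) (h : y ∈ reduce (A ++ x :: y :: B)) :
    x ∈ reduce (A ++ x :: y :: B) := by
  obtain ⟨hxy, -, -, hyA, hyB⟩ := distinct_of_nodup_append_cons_cons hl
  rw [reduce_append] at h ⊢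
  have hy' : y ∈ reduce (x :: y :: B) := by
    simpa [hyA] using (foldr_reduceStep_sublist A _).subset h
  have hhead : ∀ z ∈ (reduce B).head?, z.2 = false := by
    intro z hz
    obtain ⟨r, hr⟩ : ∃ r, reduce B = z :: r := by
      cases hB : reduce B <;> simp_all
    by_contra hz'
    have hsub : reduce (x :: y :: B) <+ x :: r := by
      rw [reduce_cons, reduce_cons, hr, reduceStep_neg_pos hy (by simpa using hz')]
      exact reduceStep_sublist x r
    have hyr : y ∈ r := by simpa [Ne.symm hxy] using hsub.subset hy'
    exact hyB ((reduce_sublist B).subset (hr ▸ List.mem_cons_of_mem z hyr))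
  have hs : reduce (x :: y :: B) = x :: y :: reduce B := by
    rw [reduce_cons, reduce_cons, reduceStep_eq_cons fun z hz _ => hhead z hz,
      reduceStep_eq_cons (by simp [hy])]
  obtain ⟨t, m, heq, -, hpos⟩ := exists_foldr_reduceStep_eq A (reduce (x :: y :: B))
  rw [heq, hs]
  cases m with
  | zero => simp
  | succ m => exact absurd (hpos x (by simp [hs])) (by simp [hx])

/-- `y` can only be cancelled after `x` is. -/
theorem mem_reduce_of_pos_pos (hx : x.2 = true) (hy : y.2 = true)
    (hl : (A ++ x :: y :: B).Nodup) (h : x ∈ reduce (A ++ x :: y :: B)) :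
    y ∈ reduce (A ++ x :: y :: B) := by
  obtain ⟨hxy, hxA, hxB, -, -⟩ := distinct_of_nodup_append_cons_cons hl
  rw [reduce_append] at h ⊢
  obtain ⟨t, m, heq, htA, -⟩ := exists_foldr_reduceStep_eq A (reduce (x :: y :: B))
  have hs : reduce (x :: y :: B) = x :: y :: reduce B := by
    rw [reduce_cons, reduce_cons, reduceStep_of_pos hy, reduceStep_of_pos hx]
  rw [heq, hs] at h ⊢
  cases m with
  | zero => simp
  | succ m =>
    have hxd : x ∈ (y :: reduce B).drop m :=
      (List.mem_append.mp h).resolve_left fun hm => hxA (htA.subset hm)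
    have hxB' := (List.drop_sublist m _).subset hxd
    simp only [List.mem_cons, hxy, false_or] at hxB'
    exact absurd ((reduce_sublist B).subset hxB') hxB

end AdjacentPair

theorem exists_decFactors_cons_s16 (a : ℕ) (r : List ℕ) :
    ∃ f fs, decFactors (a :: r) = (a :: f) :: fs := by
  rw [decFactors]
  rcases decFactors r with _ | ⟨_ | ⟨b, f⟩, fs⟩
  · exact ⟨[], [], rfl⟩
  · exact ⟨[], [] :: fs, rfl⟩
  · dsimp only
    split
    · exact ⟨b :: f, fs, rfl⟩
    · exact ⟨[], (b :: f) :: fs, rfl⟩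

theorem decFactors_cons_of_eq {r : List ℕ} {b : ℕ} {f : List ℕ} {fs : List (List ℕ)}
    (h : decFactors r = (b :: f) :: fs) (a : ℕ) :
    decFactors (a :: r) = if b < a then (a :: b :: f) :: fs else [a] :: (b :: f) :: fs := by
  rw [decFactors, h]

theorem map_length_decFactors_eq_of_descents {t t' : List ℕ} (hlen : t.length = t'.length)
    (hdesc : ∀ j, j + 1 < t.length →
      (t.getD (j + 1) 0 < t.getD j 0 ↔ t'.getD (j + 1) 0 < t'.getD j 0)) :
    (decFactors t).map List.length = (decFactors t').map List.length := by
  induction t generalizing t' with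
  | nil => rw [List.eq_nil_of_length_eq_zero hlen.symm]
  | cons a r ih =>
    obtain _ | ⟨a', r'⟩ := t'
    · simp at hlen
    obtain _ | ⟨b, s⟩ := r
    · obtain rfl : r' = [] := List.eq_nil_of_length_eq_zero (by simpa using hlen.symm)
      rfl
    obtain _ | ⟨b', s'⟩ := r'
    · simp at hlen
    have ihr := ih (t' := b' :: s') (by simpa using hlen) fun j hj => by
      simpa using hdesc (j + 1) (by simpa using hj)
    have h0 : b < a ↔ b' < a' := by simpa using hdesc 0 (by simp)
    obtain ⟨f, fs, hf⟩ := exists_decFactors_cons_s16 b s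
    obtain ⟨f', fs', hf'⟩ := exists_decFactors_cons_s16 b' s'
    rw [hf, hf'] at ihr
    simp only [List.map_cons, List.length_cons, List.cons.injEq, add_left_inj] at ihr
    rw [decFactors_cons_of_eq hf, decFactors_cons_of_eq hf']
    by_cases hba : b < a
    · simp [hba, h0.mp hba, ihr]
    · simp [hba, mt h0.mpr hba, ihr]

theorem map_length_decFactors_set {t : List ℕ} {k c : ℕ}
    (hL : ∀ j, j + 1 = k → (c < t.getD j 0 ↔ t.getD k 0 < t.getD j 0))
    (hR : k + 1 < t.length → (t.getD (k + 1) 0 < c ↔ t.getD (k + 1) 0 < t.getD k 0)) :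
    (decFactors (t.set k c)).map List.length = (decFactors t).map List.length := by
  refine map_length_decFactors_eq_of_descents (List.length_set ..) fun j hj => ?_
  simp only [List.length_set] at hj
  by_cases hk : k < t.length
  · simp only [List.getD_eq_getElem?_getD, List.getElem?_set, hk, if_true] at hL hR ⊢
    by_cases hkj : k = j + 1
    · subst hkj
      simpa using hL j rfl
    by_cases hkj' : k = j
    · subst hkj'
      simpa using hR hj
    · simp [hkj, hkj']
  · rw [List.set_eq_of_length_le (by omega)]

section Signature

variable {i j k : ℕ} {u : List ℕ}

theorem mem_signWord {i k : ℕ} {b : Bool} {u : List ℕ} :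
    (k, b) ∈ signWord i u ↔ k < u.length ∧ u.getD k 0 = if b then i else i + 1 := by
  simp only [signWord, List.mem_filterMap, List.mem_map, Prod.exists, Prod.swap_prod_mk,
    List.mk_mem_zipIdx_iff_getElem?, Prod.mk.injEq, List.getElem?_eq_some_iff]
  constructor
  · rintro ⟨p, a, ⟨a', p', ⟨hp, rfl⟩, rfl, rfl⟩, hg⟩
    split_ifs at hg <;> cases b <;> simp at hg <;> subst hg <;> simp_all
  · rintro ⟨hk, hval⟩
    refine ⟨k, u[k], ⟨_, k, ⟨hk, rfl⟩, rfl, rfl⟩, ?_⟩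
    rw [List.getD_eq_getElem _ _ hk] at hval
    cases b <;> simp [hval]

theorem pairwise_signWord (i : ℕ) (u : List ℕ) :
    (signWord i u).Pairwise fun x y => x.1 < y.1 := by
  have h := List.pairwise_lt_range' (s := 0) (n := u.length)
  rw [← List.zipIdx_map_snd 0 u, List.pairwise_map] at h
  rw [signWord, List.pairwise_filterMap, List.pairwise_map]
  refine h.imp fun {a b} hab x hx y hy => ?_
  have hfst : ∀ (c : ℕ × ℕ) (z : ℕ × Bool), (if c.swap.2 = i then some (c.swap.1, true)
      else if c.swap.2 = i + 1 then some (c.swap.1, false) else none) = some z → z.1 = c.2 := by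
    intro c z hz
    split_ifs at hz <;> cases hz <;> rfl
  rw [hfst a x hx, hfst b y hy]
  exact hab


theorem nodup_signWord (i : ℕ) (u : List ℕ) : (signWord i u).Nodup :=
  (pairwise_signWord i u).imp fun h he => (he ▸ h).false

theorem pairwise_reduce_signWord (i : ℕ) (u : List ℕ) :
    (reduce (signWord i u)).Pairwise fun x y => x.1 < y.1 :=
  (pairwise_signWord i u).sublist (reduce_sublist _)

theorem exists_signWord_eq_append_cons_cons {b b' : Bool} (h : (k, b) ∈ signWord i u)
    (h' : (k + 1, b') ∈ signWord i u) :
    ∃ A B, signWord i u = A ++ (k, b) :: (k + 1, b') :: B :=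
  exists_eq_append_cons_cons_of_pairwise (pairwise_signWord i u) h h' rfl

def IsLeftmostMinus (i : ℕ) (u : List ℕ) (k : ℕ) : Prop :=
  ((reduce (signWord i u)).filter fun x => !x.2).head? = some (k, false)

def IsRightmostPlus (i : ℕ) (u : List ℕ) (k : ℕ) : Prop :=
  ((reduce (signWord i u)).filter fun x => x.2).getLast? = some (k, true)

theorem exists_isLeftmostMinus_of_KE_eq_some {v : List ℕ} (h : KE i u = some v) :
    ∃ k, IsLeftmostMinus i u k ∧ v = u.set k i := by
  obtain ⟨⟨k, b⟩, hx, rfl⟩ := Option.map_eq_some_iff.mp h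
  obtain rfl : b = false := by simpa using List.of_mem_filter (List.mem_of_mem_head? hx)
  exact ⟨k, hx, rfl⟩

theorem exists_isRightmostPlus_of_KF_eq_some {v : List ℕ} (h : KF i u = some v) :
    ∃ k, IsRightmostPlus i u k ∧ v = u.set k (i + 1) := by
  obtain ⟨⟨k, b⟩, hx, rfl⟩ := Option.map_eq_some_iff.mp h
  obtain rfl : b = true := by simpa using List.of_mem_filter (List.mem_of_getLast? hx)
  exact ⟨k, hx, rfl⟩

namespace IsLeftmostMinus

theorem mem_reduce (h : IsLeftmostMinus i u k) : (k, false) ∈ reduce (signWord i u) :=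
  List.mem_of_mem_filter (List.mem_of_mem_head? h)

theorem lt_length (h : IsLeftmostMinus i u k) : k < u.length :=
  (mem_signWord.mp ((reduce_sublist _).subset h.mem_reduce)).1

theorem getD_eq (h : IsLeftmostMinus i u k) : u.getD k 0 = i + 1 :=
  (mem_signWord.mp ((reduce_sublist _).subset h.mem_reduce)).2

theorem getD_succ_ne (h : IsLeftmostMinus i u k) (hk : k + 1 < u.length) :
    u.getD (k + 1) 0 ≠ i := by
  intro hval
  obtain ⟨A, B, hs⟩ := exists_signWord_eq_append_cons_cons
    ((reduce_sublist _).subset h.mem_reduce)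
    (mem_signWord (b := true) |>.mpr ⟨hk, by simpa using hval⟩)
  have hmem := h.mem_reduce
  rw [hs] at hmem
  exact (notMem_reduce_of_neg_pos rfl rfl (hs ▸ nodup_signWord i u)).1 hmem

theorem getD_pred_ne (h : IsLeftmostMinus i u (j + 1)) : u.getD j 0 ≠ i + 1 := by
  intro hval
  obtain ⟨A, B, hs⟩ := exists_signWord_eq_append_cons_cons
    (mem_signWord (b := false) |>.mpr ⟨by have := h.lt_length; omega, by simpa using hval⟩)
    ((reduce_sublist _).subset h.mem_reduce)
  have hj : (j, false) ∈ reduce (signWord i u) := by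
    have hmem := h.mem_reduce
    rw [hs] at hmem ⊢
    exact mem_reduce_of_neg_neg rfl rfl (hs ▸ nodup_signWord i u) hmem
  have := le_of_head?_eq_some_of_pairwise ((pairwise_reduce_signWord i u).filter _) h
    (List.mem_filter.mpr ⟨hj, rfl⟩)
  simp at this

end IsLeftmostMinus

namespace IsRightmostPlus

theorem mem_reduce (h : IsRightmostPlus i u k) : (k, true) ∈ reduce (signWord i u) :=
  List.mem_of_mem_filter (List.mem_of_getLast? h)

theorem lt_length (h : IsRightmostPlus i u k) : k < u.length :=
  (mem_signWord.mp ((reduce_sublist _).subset h.mem_reduce)).1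

theorem getD_eq (h : IsRightmostPlus i u k) : u.getD k 0 = i :=
  (mem_signWord.mp ((reduce_sublist _).subset h.mem_reduce)).2

theorem getD_pred_ne (h : IsRightmostPlus i u (j + 1)) : u.getD j 0 ≠ i + 1 := by
  intro hval
  obtain ⟨A, B, hs⟩ := exists_signWord_eq_append_cons_cons
    (mem_signWord (b := false) |>.mpr ⟨by have := h.lt_length; omega, by simpa using hval⟩)
    ((reduce_sublist _).subset h.mem_reduce)
  have hmem := h.mem_reduce
  rw [hs] at hmem
  exact (notMem_reduce_of_neg_pos rfl rfl (hs ▸ nodup_signWord i u)).2 hmem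

theorem getD_succ_ne (h : IsRightmostPlus i u k) (hk : k + 1 < u.length) :
    u.getD (k + 1) 0 ≠ i := by
  intro hval
  obtain ⟨A, B, hs⟩ := exists_signWord_eq_append_cons_cons
    ((reduce_sublist _).subset h.mem_reduce)
    (mem_signWord (b := true) |>.mpr ⟨hk, by simpa using hval⟩)
  have hk1 : (k + 1, true) ∈ reduce (signWord i u) := by
    have hmem := h.mem_reduce
    rw [hs] at hmem ⊢
    exact mem_reduce_of_pos_pos rfl rfl (hs ▸ nodup_signWord i u) hmem
  have := le_of_getLast?_eq_some_of_pairwise ((pairwise_reduce_signWord i u).filter _) h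
    (List.mem_filter.mpr ⟨hk1, rfl⟩)
  simp at this

end IsRightmostPlus

end Signature

theorem kashiwara_preserves_tabloid_shape_general (u : List ℕ) (i : ℕ) :
    (∀ v, KE i u = some v →
      (decFactors v).map List.length = (decFactors u).map List.length) ∧
    (∀ v, KF i u = some v →
      (decFactors v).map List.length = (decFactors u).map List.length) := by
  refine ⟨fun v hv => ?_, fun v hv => ?_⟩
  · obtain ⟨k, hk, rfl⟩ := exists_isLeftmostMinus_of_KE_eq_some hv
    have hval := hk.getD_eq
    refine map_length_decFactors_set (fun j hj => ?_) fun hlen => ?_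
    · subst hj
      have := hk.getD_pred_ne
      omega
    · have := hk.getD_succ_ne hlen
      omega
  · obtain ⟨k, hk, rfl⟩ := exists_isRightmostPlus_of_KF_eq_some hv
    have hval := hk.getD_eq
    refine map_length_decFactors_set (fun j hj => ?_) fun hlen => ?_
    · subst hj
      have := hk.getD_pred_ne
      omega
    · have := hk.getD_succ_ne hlen
      omega

/-- Let `u ∈ 𝒜_n^*` and `i ∈ {1,…,n−1}`. If the Kashiwara operator
`ẽ_i` (resp. `f̃_i`) is defined on `u`, then the sequence of lengths of the maximal
strictly decreasing factors of the result equals that of `u`; i.e. the Kashiwara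
operators preserve the shape of the associated quasi-ribbon tabloid. -/
theorem kashiwara_preserves_tabloid_shape (n : ℕ) (u : List ℕ) (hu : IsWord n u)
    (i : ℕ) (hi1 : 1 ≤ i) (hi2 : i < n) :
    (∀ v, KE i u = some v →
      (decFactors v).map List.length = (decFactors u).map List.length) ∧
    (∀ v, KF i u = some v →
      (decFactors v).map List.length = (decFactors u).map List.length) :=
  kashiwara_preserves_tabloid_shape_general u i

end HypoCrystal
end

section
/- Let u, v ∈ 𝒜_n^* and i ∈ {1,...,n−1}. If f_i(u) = v (i.e., there is an edge from u to v labelled i in the quasi-crystal graph), then f_{n−i}(v^♯) is defined and f_{n−i}(v^♯) = u^♯ (i.e., there is an edge from v^♯ to u^♯ labelled n−i). In particular, the Schützenberger involution maps connected components of the quasi-crystal graph to connected components. -/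
/-!
A lowering edge `f_i(u) = v` replaces a letter `i` of `u = A i B` by `i+1`, and `f_i` is
defined there exactly when `A` has no letter `i+1` and `B` no letter `i`. This
description is symmetric under `♯`, which reverses the word and sends the letters
`i, i+1` to `n-i+1, n-i`: the edge `A i B → A (i+1) B` becomes
`B♯ (n-i) A♯ → B♯ (n-i+1) A♯`, an edge labelled `n-i`.
-/

namespace HypoCrystal

theorem replaceFirst_eq_some_iff {a b : ℕ} {l m : List ℕ} :
    replaceFirst a b l = some m ↔ ∃ p q, l = p ++ a :: q ∧ a ∉ p ∧ m = p ++ b :: q := by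
  induction l generalizing m with
  | nil => simp [replaceFirst]
  | cons x xs ih =>
    by_cases hx : x = a
    · simp only [replaceFirst, if_pos hx, Option.some.injEq]
      subst hx
      constructor
      · rintro rfl
        exact ⟨[], xs, rfl, List.not_mem_nil, rfl⟩
      · rintro ⟨_ | ⟨y, p⟩, q, hl, hp, rfl⟩ <;> simp_all
    · simp only [replaceFirst, if_neg hx, Option.map_eq_some_iff, ih]
      constructor
      · rintro ⟨_, ⟨p, q, rfl, hp, rfl⟩, rfl⟩
        exact ⟨x :: p, q, rfl, by simp [Ne.symm hx, hp], rfl⟩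
      · rintro ⟨_ | ⟨y, p⟩, q, hl, hp, rfl⟩
        · simp_all
        · simp only [List.cons_append, List.cons.injEq, List.mem_cons, not_or] at hl hp
          obtain ⟨rfl, rfl⟩ := hl
          exact ⟨_, ⟨p, q, rfl, hp.2, rfl⟩, rfl⟩

theorem hasInv_iff_exists_append {i : ℕ} {u : List ℕ} :
    HasInv i u ↔ ∃ r₁ r₂, u = r₁ ++ r₂ ∧ i + 1 ∈ r₁ ∧ i ∈ r₂ := by
  constructor
  · rintro ⟨v, w, x, rfl⟩
    exact ⟨v ++ [i + 1], w ++ i :: x, by simp, by simp, by simp⟩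
  · rintro ⟨r₁, r₂, rfl, h₁, h₂⟩
    obtain ⟨v, w, rfl⟩ := List.append_of_mem h₁
    obtain ⟨x, y, rfl⟩ := List.append_of_mem h₂
    exact ⟨v, w ++ x, y, by simp⟩

theorem hasInv_append_cons_iff {i : ℕ} {A B : List ℕ} (hB : i ∉ B) :
    HasInv i (A ++ i :: B) ↔ i + 1 ∈ A := by
  rw [hasInv_iff_exists_append]
  constructor
  · rintro ⟨r₁, r₂, h, h₁, h₂⟩
    rcases List.append_eq_append_iff.1 h with ⟨a', rfl, ha'⟩ | ⟨c', rfl, -⟩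
    · cases a' with
      | nil => simpa using h₁
      | cons a a' =>
        obtain ⟨-, rfl⟩ := List.cons_eq_cons.1 ha'
        exact absurd (List.mem_append_right _ h₂) hB
    · exact List.mem_append_left _ h₁
  · intro h
    exact ⟨A, i :: B, rfl, h, List.mem_cons_self⟩

theorem qf_eq_some_iff {i : ℕ} {u v : List ℕ} :
    qf i u = some v ↔
      ∃ A B, u = A ++ i :: B ∧ v = A ++ (i + 1) :: B ∧ i + 1 ∉ A ∧ i ∉ B := by
  unfold qf
  constructor
  · intro h
    split_ifs at h with hinv
    obtain ⟨w, hw, rfl⟩ := Option.map_eq_some_iff.1 h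
    obtain ⟨p, q, hu, hp, rfl⟩ := replaceFirst_eq_some_iff.1 hw
    rw [List.reverse_eq_iff, List.reverse_append, List.reverse_cons,
      List.append_assoc, List.singleton_append] at hu
    subst hu
    have hB : i ∉ p.reverse := by simpa using hp
    exact ⟨q.reverse, p.reverse, rfl, by simp, fun h => hinv ((hasInv_append_cons_iff hB).2 h),
      hB⟩
  · rintro ⟨A, B, rfl, rfl, hA, hB⟩
    rw [if_neg (mt (hasInv_append_cons_iff hB).1 hA), Option.map_eq_some_iff]
    refine ⟨B.reverse ++ (i + 1) :: A.reverse, ?_, by simp⟩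
    exact replaceFirst_eq_some_iff.2 ⟨B.reverse, A.reverse, by simp, by simpa using hB, rfl⟩

theorem sharp_append_cons (n a : ℕ) (A B : List ℕ) :
    sharp n (A ++ a :: B) = sharp n B ++ (n + 1 - a) :: sharp n A := by
  simp [sharp]

theorem mem_sharp_iff {n c : ℕ} {w : List ℕ} (hc : 0 < c) (hcn : c ≤ n + 1) :
    c ∈ sharp n w ↔ n + 1 - c ∈ w := by
  simp only [sharp, List.mem_map, List.mem_reverse]
  constructor
  · rintro ⟨a, ha, rfl⟩
    rwa [Nat.sub_sub_self (by omega)]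
  · intro h
    exact ⟨_, h, by omega⟩

theorem qf_sharp_of_qf {n i : ℕ} {u v : List ℕ} (hin : i < n) (h : qf i u = some v) :
    qf (n - i) (sharp n v) = some (sharp n u) := by
  obtain ⟨A, B, rfl, rfl, hA, hB⟩ := qf_eq_some_iff.1 h
  refine qf_eq_some_iff.2 ⟨sharp n B, sharp n A, ?_, ?_, ?_, ?_⟩
  · rw [sharp_append_cons]; congr 2; omega
  · rw [sharp_append_cons]; congr 2; omega
  · rwa [mem_sharp_iff (by omega) (by omega), show n + 1 - (n - i + 1) = i by omega]
  · rwa [mem_sharp_iff (by omega) (by omega), show n + 1 - (n - i) = i + 1 by omega]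

theorem edge_sharp {n i : ℕ} {u v : List ℕ} (h : Edge n i u v) :
    Edge n (n - i) (sharp n v) (sharp n u) := by
  obtain ⟨hi, hin, hf⟩ := h
  exact ⟨by omega, by omega, qf_sharp_of_qf hin hf⟩

theorem adj_sharp {n : ℕ} {u v : List ℕ} (h : Adj n u v) : Adj n (sharp n u) (sharp n v) := by
  obtain ⟨i, h | h⟩ := h
  · exact ⟨n - i, Or.inr (edge_sharp h)⟩
  · exact ⟨n - i, Or.inl (edge_sharp h)⟩

theorem sameComp_sharp {n : ℕ} {u v : List ℕ} (h : SameComp n u v) :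
    SameComp n (sharp n u) (sharp n v) :=
  h.lift (sharp n) fun _ _ => adj_sharp

/-- Let `u, v ∈ 𝒜_n^*` and `i ∈ {1,…,n−1}`. If `f_i(u) = v`, then
`f_{n−i}(v^♯)` is defined and equals `u^♯`, where `♯` is the Schützenberger involution.
In particular, the Schützenberger involution maps connected components of the
quasi-crystal graph to connected components. -/
theorem schuetzenberger_involution_on_quasicrystal (n : ℕ) :
    (∀ u v : List ℕ, IsWord n u → ∀ i, 1 ≤ i → i < n →
      qf i u = some v → qf (n - i) (sharp n v) = some (sharp n u)) ∧
    (∀ u v : List ℕ, IsWord n u → SameComp n u v →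
      SameComp n (sharp n u) (sharp n v)) :=
  ⟨fun _ _ _ _ _ hin h => qf_sharp_of_qf hin h, fun _ _ _ h => sameComp_sharp h⟩

end HypoCrystal
end

section
/- Let u, v ∈ 𝒜_n^* with wt(u) = wt(v). Then there exist g, h ∈ 𝒜_n^* such that ug ≡_hypo gv and hu ≡_hypo vh; that is, the images of u and v in the hypoplactic monoid hypo_n = 𝒜_n^*/≡_hypo are o-conjugate. -/
/-!
The word `δ = n (n-1) ⋯ 1` is central in `hypo_n`: a letter `c` moves past the letters of `δ`
larger than `c` by the Knuth relation `acb ≡ cab`, and `c · c(c-1)⋯1 ≡ c(c-1)⋯1 · c` by the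
relation `bac ≡ bca`. In front of `δ`, moreover, any two letters commute; this is where the
quasi-ribbon relations are needed. Hence `uδ ≡ vδ` whenever `v` is a rearrangement of `u`, so
`uδ ≡ vδ ≡ δv` and `δu ≡ uδ ≡ vδ`: take `g = h = δ`.
-/

namespace HypoCrystal

theorem isWord_cons {n a : ℕ} {u : List ℕ} :
    IsWord n (a :: u) ↔ (1 ≤ a ∧ a ≤ n) ∧ IsWord n u :=
  List.forall_mem_cons

theorem HypoCong.cons {n : ℕ} (x : ℕ) {u v : List ℕ} (h : HypoCong n u v) :
    HypoCong n (x :: u) (x :: v) :=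
  (HypoCong.refl [x]).append h

instance {n : ℕ} : Trans (HypoCong n) (HypoCong n) (HypoCong n) :=
  ⟨HypoCong.trans⟩

theorem HypoCong.append_right {n : ℕ} {u v : List ℕ} (h : HypoCong n u v) (t : List ℕ) :
    HypoCong n (u ++ t) (v ++ t) :=
  h.append (HypoCong.refl t)

def descWord : ℕ → List ℕ
  | 0 => []
  | k + 1 => (k + 1) :: descWord k

theorem isWord_descWord {n k : ℕ} (hk : k ≤ n) : IsWord n (descWord k) := by
  induction k with
  | zero => simp [IsWord, descWord]
  | succ k ih => exact isWord_cons.mpr ⟨by omega, ih (by omega)⟩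

theorem descWord_succ_append_singleton {n k m : ℕ} (hm : m < k) (hk : k ≤ n) :
    HypoCong n (descWord (m + 1) ++ [k]) ((m + 1) :: k :: descWord m) := by
  induction m with
  | zero => exact HypoCong.refl _
  | succ m ih =>
    have hkm : HypoCong n ((m + 2) :: (m + 1) :: k :: descWord m)
        ((m + 2) :: k :: (m + 1) :: descWord m) :=
      (HypoCong.of (HypoRel.knuth2 (by omega) (by omega) (by omega) hk)).append_right _
    exact ((ih (by omega)).cons (m + 2)).trans hkm

theorem cons_descWord {n k c : ℕ} (hc : 1 ≤ c) (hck : c ≤ k) (hk : k ≤ n) :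
    HypoCong n (c :: descWord k) (descWord k ++ [c]) := by
  induction k with
  | zero => omega
  | succ k ih =>
    rcases (show c = k + 1 ∨ c ≤ k by omega) with rfl | hck
    · exact (descWord_succ_append_singleton (Nat.lt_succ_self k) hk).symm
    · obtain ⟨m, rfl⟩ : ∃ m, k = m + 1 := ⟨k - 1, by omega⟩
      have hkc : HypoCong n (c :: (m + 2) :: (m + 1) :: descWord m)
          ((m + 2) :: c :: (m + 1) :: descWord m) :=
        (HypoCong.of (HypoRel.knuth1 hc hck (by omega) hk)).append_right _
      exact hkc.trans ((ih hck (by omega)).cons (m + 2))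

theorem append_descWord_comm {n : ℕ} {w : List ℕ} (hw : IsWord n w) :
    HypoCong n (w ++ descWord n) (descWord n ++ w) := by
  induction w with
  | nil => simpa using HypoCong.refl (descWord n)
  | cons c w ih =>
    obtain ⟨hc, hw⟩ := isWord_cons.mp hw
    have hpass : HypoCong n (c :: descWord n ++ w) (descWord n ++ [c] ++ w) :=
      (cons_descWord hc.1 hc.2 le_rfl).append_right w
    simpa using ((ih hw).cons c).trans hpass

theorem swap_descWord_self {n a b : ℕ} (ha : 1 ≤ a) (hab : a < b) (hb : b ≤ n) :
    HypoCong n (b :: a :: descWord b) (a :: b :: descWord b) := by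
  obtain ⟨m, rfl⟩ : ∃ m, b = m + 2 := ⟨b - 2, by omega⟩
  have hquasi : HypoCong n ((m + 2) :: a :: (m + 2) :: (m + 1) :: descWord m)
      (a :: (m + 2) :: (m + 1) :: (m + 2) :: descWord m) :=
    (HypoCong.of (HypoRel.quasi1 ha (by omega) (by omega) le_rfl hb)).append_right _
  have hknuth : HypoCong n ((m + 2) :: (m + 1) :: (m + 2) :: descWord m)
      ((m + 2) :: (m + 2) :: (m + 1) :: descWord m) :=
    (HypoCong.of (HypoRel.knuth2 (by omega) (by omega) le_rfl hb)).append_right _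
  exact hquasi.trans (hknuth.cons a)

theorem swap_descWord_succ {n a b k : ℕ} (ha : 1 ≤ a) (hab : a < b) (hbk : b ≤ k + 1)
    (hk : k + 2 ≤ n) (ih : HypoCong n (b :: a :: descWord (k + 1)) (a :: b :: descWord (k + 1))) :
    HypoCong n (b :: a :: descWord (k + 2)) (a :: b :: descWord (k + 2)) := by
  let D := descWord k
  calc HypoCong n (b :: a :: (k + 2) :: (k + 1) :: D) (b :: (k + 2) :: a :: (k + 1) :: D) :=
        (HypoCong.of (HypoRel.knuth2 ha hab (by omega) hk)).append_right _
    HypoCong n _ ((k + 2) :: b :: (k + 1) :: a :: D) :=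
        (HypoCong.of (HypoRel.quasi2 ha hab hbk (by omega) hk)).append_right _
    HypoCong n _ ((k + 2) :: b :: a :: (k + 1) :: D) :=
        ((HypoCong.of (HypoRel.knuth2 ha hab hbk (by omega))).append_right _).symm.cons _
    HypoCong n _ ((k + 2) :: a :: b :: (k + 1) :: D) := ih.cons _
    HypoCong n _ (a :: (k + 2) :: b :: (k + 1) :: D) :=
        ((HypoCong.of (HypoRel.knuth1 ha (by omega) (by omega) hk)).append_right _).symm
    HypoCong n _ (a :: b :: (k + 2) :: (k + 1) :: D) :=
        ((HypoCong.of (HypoRel.knuth1 (by omega) hbk (by omega) hk)).append_right _).symm.cons _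

theorem swap_descWord {n a b k : ℕ} (ha : 1 ≤ a) (hab : a < b) (hbk : b ≤ k) (hk : k ≤ n) :
    HypoCong n (b :: a :: descWord k) (a :: b :: descWord k) := by
  induction k, hbk using Nat.le_induction with
  | base => exact swap_descWord_self ha hab hk
  | succ k hbk ih =>
    obtain ⟨j, rfl⟩ : ∃ j, k = j + 1 := ⟨k - 1, by omega⟩
    exact swap_descWord_succ ha hab hbk hk (ih (by omega))

theorem swap_append_descWord {n a b : ℕ} (ha : 1 ≤ a) (hab : a < b) (hb : b ≤ n)
    {l : List ℕ} (hl : IsWord n l) :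
    HypoCong n (b :: a :: (l ++ descWord n)) (a :: b :: (l ++ descWord n)) := by
  have hcomm := append_descWord_comm hl
  calc HypoCong n (b :: a :: (l ++ descWord n)) (b :: a :: (descWord n ++ l)) :=
        (hcomm.cons a).cons b
    HypoCong n _ (a :: b :: (descWord n ++ l)) :=
        (swap_descWord ha hab hb le_rfl).append_right l
    HypoCong n _ (a :: b :: (l ++ descWord n)) := (hcomm.symm.cons b).cons a

theorem perm_append_descWord {n : ℕ} {u v : List ℕ} (huv : u.Perm v) (hu : IsWord n u) :
    HypoCong n (u ++ descWord n) (v ++ descWord n) := by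
  induction huv with
  | nil => exact HypoCong.refl _
  | cons x _ ih => exact (ih (isWord_cons.mp hu).2).cons x
  | swap x y l =>
    obtain ⟨hy, hx, hl⟩ : (1 ≤ y ∧ y ≤ n) ∧ (1 ≤ x ∧ x ≤ n) ∧ IsWord n l := by
      simpa only [isWord_cons] using hu
    rcases lt_trichotomy x y with hxy | rfl | hyx
    · exact swap_append_descWord hx.1 hxy hy.2 hl
    · exact HypoCong.refl _
    · exact (swap_append_descWord hy.1 hyx hx.2 hl).symm
  | trans h₁ _ ih₁ ih₂ => exact (ih₁ hu).trans (ih₂ fun c hc => hu c (h₁.symm.subset hc))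

/-- Let `u, v ∈ 𝒜_n^*` with `wt(u) = wt(v)`. Then there exist
`g, h ∈ 𝒜_n^*` such that `ug ≡_hypo gv` and `hu ≡_hypo vh`; that is, the images of `u`
and `v` in the hypoplactic monoid `hypo_n` are o-conjugate. -/
theorem same_weight_implies_o_conjugate (n : ℕ) (u v : List ℕ)
    (hu : IsWord n u) (hv : IsWord n v) (hwt : wt u = wt v) :
    ∃ g h : List ℕ, IsWord n g ∧ IsWord n h ∧
      HypoCong n (u ++ g) (g ++ v) ∧ HypoCong n (h ++ u) (v ++ h) := by
  have hperm : u.Perm v := List.perm_iff_count.mpr (congrFun hwt)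
  have hδ : HypoCong n (u ++ descWord n) (v ++ descWord n) := perm_append_descWord hperm hu
  exact ⟨descWord n, descWord n, isWord_descWord le_rfl, isWord_descWord le_rfl,
    hδ.trans (append_descWord_comm hv), (append_descWord_comm hu).symm.trans hδ⟩

end HypoCrystal
end
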